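/- Let m be a positive integer and let a_1, ..., a_m be real numbers. Define Δ̄^{1/2} ∈ S^m with entries |a_i - a_j| off the diagonal and 0 on the diagonal, and Δ̄ ∈ S^m with entries |a_i - a_j|^2 off the diagonal and 0 on the diagonal. Let J = I_m - (1/m)𝟏𝟏^T, B(C) := -(1/2) J C J, and let μ₀ be the smallest eigenvalue of B(Δ̄^{1/2}). If β ≥ -4μ₀, then for every x ∈ ℝ^m one has x^T B(Δ̄) x + 2β · x^T B(Δ̄^{1/2}) x + (1/2) β^2 · x^T J x ≥ β (2μ₀ + β/2) · x^T J x ≥ 0. -/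

import Mathlib

open Matrix

/-- The centering matrix `J = I - (1/k) 𝟏𝟏ᵀ`. -/
noncomputable def centeringMatrix (k : ℕ) : Matrix (Fin k) (Fin k) ℝ :=
  1 - (k : ℝ)⁻¹ • Matrix.of (fun _ _ => (1 : ℝ))

/-- The double-centered matrix `B(C) = -(1/2) J C J`. -/
noncomputable def doubleCenter {k : ℕ} (C : Matrix (Fin k) (Fin k) ℝ) :
    Matrix (Fin k) (Fin k) ℝ :=
  (-(1/2) : ℝ) • (centeringMatrix k * C * centeringMatrix k)

/-! Double centering annihilates constants, so `B(C) 𝟏 = 0` and the least eigenvalue `μ₀` of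
`B(Δ̄^{1/2})` is `≤ 0`; hence `β ≥ -4μ₀ ≥ 0`. On a centered vector `y = J x` the quadratic form
of the squared-distance matrix is `-2 (yᵀa)²`, so `xᵀB(Δ̄)x = ((Jx)ᵀa)² ≥ 0`. As `J` is a symmetric
idempotent, `xᵀJx = ‖Jx‖²` and `xᵀB(Δ̄^{1/2})x = (Jx)ᵀB(Δ̄^{1/2})(Jx) ≥ μ₀‖Jx‖²`. The first
inequality is then `xᵀB(Δ̄)x + 2β (xᵀB(Δ̄^{1/2})x - μ₀ xᵀJx) ≥ 0`, and the second is
`β ≥ 0`, `2μ₀ + β/2 ≥ 0`. -/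

lemma sqDist_mulVec {n : Type*} [Fintype n] (a y : n → ℝ) :
    of (fun t u => (a t - a u) ^ 2) *ᵥ y
      = (y ⬝ᵥ 1) • a ^ 2 - (2 * (y ⬝ᵥ a)) • a + (y ⬝ᵥ a ^ 2) • 1 := by
  ext t
  simp only [mulVec, dotProduct, of_apply, Pi.add_apply, Pi.sub_apply, Pi.smul_apply,
    Pi.pow_apply, Pi.one_apply, smul_eq_mul, Finset.sum_mul, Finset.mul_sum,
    ← Finset.sum_sub_distrib, ← Finset.sum_add_distrib]
  exact Finset.sum_congr rfl fun u _ => by ring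

lemma dotProduct_sqDist_mulVec {n : Type*} [Fintype n] (a y : n → ℝ) :
    y ⬝ᵥ (of (fun t u => (a t - a u) ^ 2) *ᵥ y)
      = 2 * (y ⬝ᵥ 1) * (y ⬝ᵥ a ^ 2) - 2 * (y ⬝ᵥ a) ^ 2 := by
  rw [sqDist_mulVec, dotProduct_add, dotProduct_sub, dotProduct_smul, dotProduct_smul,
    dotProduct_smul, smul_eq_mul, smul_eq_mul, smul_eq_mul]
  ring

section Rayleigh

variable {n : Type*} [Fintype n] [DecidableEq n] {A : Matrix n n ℝ}

lemma Matrix.IsHermitian.posSemidef_sub_smul_one (hA : A.IsHermitian) {μ : ℝ}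
    (hμ : ∀ i, μ ≤ hA.eigenvalues i) : (A - μ • 1).PosSemidef := by
  set U : Matrix n n ℝ := (hA.eigenvectorUnitary : Matrix n n ℝ)
  have hU : U * star U = 1 := Matrix.mem_unitaryGroup_iff.mp hA.eigenvectorUnitary.2
  have hdecomp : A - μ • 1 = U * diagonal (fun i => hA.eigenvalues i - μ) * star U := by
    have hA' : A = U * diagonal hA.eigenvalues * star U := by
      simpa [Unitary.conjStarAlgAut_apply] using hA.spectral_theorem
    have hμ1 : μ • (1 : Matrix n n ℝ) = U * diagonal (fun _ => μ) * star U := by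
      rw [← smul_one_eq_diagonal, Matrix.mul_smul, mul_one, Matrix.smul_mul, hU]
    rw [← diagonal_sub, Matrix.mul_sub, Matrix.sub_mul, ← hA', ← hμ1]
  rw [hdecomp]
  exact (posSemidef_diagonal_iff.mpr fun i => sub_nonneg.mpr (hμ i)).mul_mul_conjTranspose_same U

lemma Matrix.IsHermitian.mul_dotProduct_self_le (hA : A.IsHermitian) {μ : ℝ}
    (hμ : ∀ i, μ ≤ hA.eigenvalues i) (x : n → ℝ) : μ * (x ⬝ᵥ x) ≤ x ⬝ᵥ (A *ᵥ x) := by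
  have h := (hA.posSemidef_sub_smul_one hμ).dotProduct_mulVec_nonneg x
  rw [star_trivial, sub_mulVec, smul_mulVec, one_mulVec, dotProduct_sub, dotProduct_smul,
    smul_eq_mul] at h
  linarith

lemma Matrix.IsHermitian.iInf_eigenvalues_nonpos (hA : A.IsHermitian)
    (hA1 : A *ᵥ 1 = 0) : ⨅ i, hA.eigenvalues i ≤ 0 := by
  rcases isEmpty_or_nonempty n with hn | hn
  · -- the infimum of the empty family of reals is `0`
    simp [Real.iInf_of_isEmpty]
  · have h := hA.mul_dotProduct_self_le (fun i => ciInf_le (Set.finite_range _).bddBelow i)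
      1
    have hcard : (0 : ℝ) < (1 : n → ℝ) ⬝ᵥ 1 := by
      simp [dotProduct, Fintype.card_pos]
    rw [hA1, dotProduct_zero] at h
    exact nonpos_of_mul_nonpos_left h hcard

end Rayleigh

lemma centeringMatrix_transpose (k : ℕ) : (centeringMatrix k)ᵀ = centeringMatrix k := by
  ext i j
  simp [centeringMatrix, one_apply, eq_comm]

lemma centeringMatrix_mulVec_one (k : ℕ) : centeringMatrix k *ᵥ 1 = 0 := by
  ext i
  have hk : (k : ℝ) ≠ 0 := Nat.cast_ne_zero.mpr i.pos.ne'
  simp [centeringMatrix, mulVec, dotProduct, one_apply, hk]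

lemma centeringMatrix_mul_self (k : ℕ) :
    centeringMatrix k * centeringMatrix k = centeringMatrix k := by
  have hJE : centeringMatrix k * of (fun _ _ => (1 : ℝ)) = 0 := by
    ext i j
    exact congrFun (centeringMatrix_mulVec_one k) i
  nth_rw 2 [centeringMatrix]
  rw [mul_sub, mul_one, Matrix.mul_smul, hJE, smul_zero, sub_zero]

section Centering

variable {k : ℕ}

lemma centeringMatrix_mulVec_dotProduct_one (x : Fin k → ℝ) :
    (centeringMatrix k *ᵥ x) ⬝ᵥ 1 = 0 := by
  rw [dotProduct_comm, dotProduct_mulVec, ← mulVec_transpose, centeringMatrix_transpose,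
    centeringMatrix_mulVec_one, zero_dotProduct]

lemma dotProduct_centeringMatrix_mulVec_comm (x y : Fin k → ℝ) :
    x ⬝ᵥ (centeringMatrix k *ᵥ y) = (centeringMatrix k *ᵥ x) ⬝ᵥ y := by
  rw [dotProduct_mulVec, ← mulVec_transpose, centeringMatrix_transpose]

lemma centeringMatrix_mulVec_mulVec (x : Fin k → ℝ) :
    centeringMatrix k *ᵥ (centeringMatrix k *ᵥ x) = centeringMatrix k *ᵥ x := by
  rw [mulVec_mulVec, centeringMatrix_mul_self]

lemma dotProduct_centeringMatrix_mulVec (x : Fin k → ℝ) :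
    x ⬝ᵥ (centeringMatrix k *ᵥ x) = (centeringMatrix k *ᵥ x) ⬝ᵥ (centeringMatrix k *ᵥ x) := by
  nth_rw 1 [← centeringMatrix_mulVec_mulVec]
  rw [dotProduct_centeringMatrix_mulVec_comm]

lemma dotProduct_doubleCenter_mulVec (C : Matrix (Fin k) (Fin k) ℝ) (x : Fin k → ℝ) :
    x ⬝ᵥ (doubleCenter C *ᵥ x)
      = -(1 / 2) * ((centeringMatrix k *ᵥ x) ⬝ᵥ (C *ᵥ (centeringMatrix k *ᵥ x))) := by
  rw [doubleCenter, smul_mulVec, dotProduct_smul, smul_eq_mul, ← mulVec_mulVec, ← mulVec_mulVec,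
    dotProduct_centeringMatrix_mulVec_comm]

lemma dotProduct_doubleCenter_mulVec_centeringMatrix (C : Matrix (Fin k) (Fin k) ℝ)
    (x : Fin k → ℝ) :
    (centeringMatrix k *ᵥ x) ⬝ᵥ (doubleCenter C *ᵥ (centeringMatrix k *ᵥ x))
      = x ⬝ᵥ (doubleCenter C *ᵥ x) := by
  rw [dotProduct_doubleCenter_mulVec, dotProduct_doubleCenter_mulVec,
    centeringMatrix_mulVec_mulVec]

lemma doubleCenter_mulVec_one (C : Matrix (Fin k) (Fin k) ℝ) : doubleCenter C *ᵥ 1 = 0 := by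
  rw [doubleCenter, smul_mulVec, ← mulVec_mulVec, centeringMatrix_mulVec_one, mulVec_zero,
    smul_zero]

lemma dotProduct_doubleCenter_sqDist_mulVec (a x : Fin k → ℝ) :
    x ⬝ᵥ (doubleCenter (of (fun t u => (a t - a u) ^ 2)) *ᵥ x)
      = ((centeringMatrix k *ᵥ x) ⬝ᵥ a) ^ 2 := by
  rw [dotProduct_doubleCenter_mulVec, dotProduct_sqDist_mulVec,
    centeringMatrix_mulVec_dotProduct_one]
  ring

end Centering

theorem stmt6_general (m : ℕ) (a : Fin m → ℝ)
    (Δhalf Δbar : Matrix (Fin m) (Fin m) ℝ)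
    (hΔbar : ∀ t u, Δbar t u = |a t - a u| ^ 2)
    (hHerm : (doubleCenter Δhalf).IsHermitian)
    (μ₀ : ℝ) (hμ₀ : μ₀ = ⨅ i, hHerm.eigenvalues i)
    (β : ℝ) (hβ : β ≥ -4 * μ₀) :
    ∀ x : Fin m → ℝ,
      x ⬝ᵥ (doubleCenter Δbar *ᵥ x) + 2 * β * (x ⬝ᵥ (doubleCenter Δhalf *ᵥ x))
          + (1/2) * β ^ 2 * (x ⬝ᵥ (centeringMatrix m *ᵥ x))
        ≥ β * (2 * μ₀ + β / 2) * (x ⬝ᵥ (centeringMatrix m *ᵥ x)) ∧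
      β * (2 * μ₀ + β / 2) * (x ⬝ᵥ (centeringMatrix m *ᵥ x)) ≥ 0 := by
  intro x
  have hμ₀_le : ∀ i, μ₀ ≤ hHerm.eigenvalues i :=
    hμ₀ ▸ fun i => ciInf_le (Set.finite_range _).bddBelow i
  have hμ₀_nonpos : μ₀ ≤ 0 := hμ₀ ▸ hHerm.iInf_eigenvalues_nonpos (doubleCenter_mulVec_one _)
  have hΔbar_eq : Δbar = of fun t u => (a t - a u) ^ 2 := by
    ext t u
    rw [hΔbar, sq_abs, of_apply]
  have hbar_nonneg : 0 ≤ x ⬝ᵥ (doubleCenter Δbar *ᵥ x) := by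
    rw [hΔbar_eq, dotProduct_doubleCenter_sqDist_mulVec]
    positivity
  have hhalf_ge : μ₀ * (x ⬝ᵥ (centeringMatrix m *ᵥ x)) ≤ x ⬝ᵥ (doubleCenter Δhalf *ᵥ x) := by
    rw [dotProduct_centeringMatrix_mulVec, ← dotProduct_doubleCenter_mulVec_centeringMatrix]
    exact hHerm.mul_dotProduct_self_le hμ₀_le _
  have hJ_nonneg : 0 ≤ x ⬝ᵥ (centeringMatrix m *ᵥ x) := by
    rw [dotProduct_centeringMatrix_mulVec]
    exact dotProduct_self_star_nonneg _
  have hβ_nonneg : 0 ≤ β := by linarith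
  refine ⟨?_, mul_nonneg (mul_nonneg hβ_nonneg (by linarith)) hJ_nonneg⟩
  nlinarith [mul_le_mul_of_nonneg_left hhalf_ge hβ_nonneg]

theorem stmt6 (m : ℕ) (hm : 0 < m) (a : Fin m → ℝ)
    (Δhalf Δbar : Matrix (Fin m) (Fin m) ℝ)
    (hΔhalf : ∀ t u, Δhalf t u = |a t - a u|)
    (hΔbar : ∀ t u, Δbar t u = |a t - a u| ^ 2)
    (hHerm : (doubleCenter Δhalf).IsHermitian)
    (μ₀ : ℝ) (hμ₀ : μ₀ = ⨅ i, hHerm.eigenvalues i)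
    (β : ℝ) (hβ : β ≥ -4 * μ₀) :
    ∀ x : Fin m → ℝ,
      x ⬝ᵥ (doubleCenter Δbar *ᵥ x) + 2 * β * (x ⬝ᵥ (doubleCenter Δhalf *ᵥ x))
          + (1/2) * β ^ 2 * (x ⬝ᵥ (centeringMatrix m *ᵥ x))
        ≥ β * (2 * μ₀ + β / 2) * (x ⬝ᵥ (centeringMatrix m *ᵥ x)) ∧
      β * (2 * μ₀ + β / 2) * (x ⬝ᵥ (centeringMatrix m *ᵥ x)) ≥ 0 :=
  stmt6_general m a Δhalf Δbar hΔbar hHerm μ₀ hμ₀ β hβ
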